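/- Let m ≥ 1 and n ≥ 2 be integers and let τ be a signature of length m. Then G^τ_{m×n}(z) = Σ_σ A_{τ,σ} · G^σ_{m×(n−1)}(z), where the sum runs over all signatures σ of length m and A is the transfer matrix for width m. -/

import Mathlib

open scoped Classical
open Polynomial

/-- The three possible states of a vertex relative to a vertex subset. -/
inductive VState : Type
  | unc | cov | occ
  deriving DecidableEq

instance instFintypeVState : Fintype VState :=
  ⟨{VState.unc, VState.cov, VState.occ}, fun x => by cases x <;> simp⟩

/-- The m×n grid graph `P_m □ P_n`; the vertex `(i, j)` lies in column `i` and row `j`. -/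
def gridGraph (m n : ℕ) : SimpleGraph (Fin m × Fin n) :=
  (SimpleGraph.pathGraph m).boxProd (SimpleGraph.pathGraph n)

/-- The state of vertex `v` with respect to `S`: occupied, covered, or uncovered. -/
noncomputable def vertexState {V : Type*} (G : SimpleGraph V) (S : Finset V) (v : V) : VState :=
  if v ∈ S then VState.occ else if ∃ u ∈ S, G.Adj u v then VState.cov else VState.unc

/-- A signature of length `m`: a string over {unc, cov, occ} with no adjacent
(unc, occ) or (occ, unc) pair. -/
def IsSignature {m : ℕ} (σ : Fin m → VState) : Prop :=
  ∀ i : Fin m, ∀ h : (i : ℕ) + 1 < m,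
    ¬(σ i = VState.unc ∧ σ ⟨(i : ℕ) + 1, h⟩ = VState.occ) ∧
    ¬(σ i = VState.occ ∧ σ ⟨(i : ℕ) + 1, h⟩ = VState.unc)

/-- `S` is almost dominating: every vertex in the first `n-1` rows is occupied or covered. -/
def AlmostDominating (m n : ℕ) (S : Finset (Fin m × Fin n)) : Prop :=
  ∀ v : Fin m × Fin n, (v.2 : ℕ) < n - 1 → vertexState (gridGraph m n) S v ≠ VState.unc

/-- The signature of `S`: the states of the vertices of the last row. -/
noncomputable def rowSig (m n : ℕ) (S : Finset (Fin m × Fin n)) : Fin m → VState :=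
  fun i =>
    if h : 0 < n then
      vertexState (gridGraph m n) S (i, ⟨n - 1, Nat.sub_lt h Nat.one_pos⟩)
    else VState.cov

/-- `G^σ_{m×n}(z)`: the generating function of almost dominating sets with signature `σ`. -/
noncomputable def genFun (m n : ℕ) (σ : Fin m → VState) : Polynomial ℤ :=
  ∑ S ∈ Finset.univ.filter
      (fun S : Finset (Fin m × Fin n) => AlmostDominating m n S ∧ rowSig m n S = σ),
    (X : Polynomial ℤ) ^ S.card

/-- `τ` is compatible with `σ`: uncovered vertices of `σ` get occupied neighbors in `τ`,
neighbors of occupied vertices of `σ` are covered or occupied, and covered vertices of `τ`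
have an occupied neighbor (above, left, or right). -/
def Compatible {m : ℕ} (τ σ : Fin m → VState) : Prop :=
  ∀ i : Fin m,
    (σ i = VState.unc → τ i = VState.occ) ∧
    (σ i = VState.occ → τ i = VState.cov ∨ τ i = VState.occ) ∧
    (τ i = VState.cov → σ i = VState.occ ∨
      (∃ j : Fin m, (j : ℕ) + 1 = (i : ℕ) ∧ τ j = VState.occ) ∨
      (∃ j : Fin m, (i : ℕ) + 1 = (j : ℕ) ∧ τ j = VState.occ))

/-- The number of occupied symbols of a signature. -/
def occCount {m : ℕ} (σ : Fin m → VState) : ℕ :=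
  (Finset.univ.filter fun i => σ i = VState.occ).card

/-- The type of signatures of length `m`. -/
abbrev Signature (m : ℕ) := {σ : Fin m → VState // IsSignature σ}

/-- The transfer matrix for width `m`, over ℤ[z], indexed by signatures of length `m`. -/
noncomputable def transferMatrix (m : ℕ) :
    Matrix (Signature m) (Signature m) (Polynomial ℤ) :=
  fun τ σ =>
    if Compatible τ.1 σ.1 then (X : Polynomial ℤ) ^ occCount τ.1 else 0

/-!
Deleting the last row of an almost dominating set `S` of the `m × (k+2)` grid whose last row has
signature `τ` leaves a set `S'` of the `m × (k+1)` grid, and `S` is recovered from `S'` by adding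
the occupied positions of `τ` as a new row. Writing `σ` for the signature of `S'`, the set `S` is
almost dominating with signature `τ` exactly when `S'` is almost dominating and `τ` is compatible
with `σ`: the first clause of compatibility says that the new row covers the uncovered vertices of
row `k+1`, the other two say that the states of the new row computed from `S` are those of `τ`.
The new row contributes `z ^ #occ(τ)`, and grouping the sets `S'` by `σ` gives the identity.
-/

open Finset SimpleGraph

section VertexState

variable {V : Type*} (G : SimpleGraph V) (S : Finset V) (v : V)

lemma vertexState_eq_occ_iff : vertexState G S v = VState.occ ↔ v ∈ S := by
  unfold vertexState; split_ifs <;> simp_all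

lemma vertexState_eq_unc_iff :
    vertexState G S v = VState.unc ↔ v ∉ S ∧ ¬∃ u ∈ S, G.Adj u v := by
  unfold vertexState; split_ifs <;> simp_all

lemma vertexState_ne_unc_iff :
    vertexState G S v ≠ VState.unc ↔ v ∈ S ∨ ∃ u ∈ S, G.Adj u v := by
  rw [Ne, vertexState_eq_unc_iff, not_and_or, not_not, not_not]

lemma vertexState_eq_ite {P Q : Prop} [Decidable P] [Decidable Q] (hP : v ∈ S ↔ P)
    (hQ : (∃ u ∈ S, G.Adj u v) ↔ Q) :
    vertexState G S v = if P then VState.occ else if Q then VState.cov else VState.unc := by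
  simp only [vertexState, hP, hQ]

end VertexState

lemma isSignature_iff {m : ℕ} {τ : Fin m → VState} :
    IsSignature τ ↔
      ∀ a i, (pathGraph m).Adj a i → τ i = VState.unc → τ a ≠ VState.occ := by
  constructor
  · intro hτ a i hadj hi ha
    rcases pathGraph_adj.mp hadj with h | h
    · have e : (⟨a + 1, h ▸ i.2⟩ : Fin m) = i := Fin.ext h
      exact (hτ a _).2 ⟨ha, by rwa [e]⟩
    · have e : (⟨i + 1, h ▸ a.2⟩ : Fin m) = a := Fin.ext h
      exact (hτ i _).1 ⟨hi, by rwa [e]⟩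
  · intro hτ i h
    have hadj : (pathGraph m).Adj i ⟨i + 1, h⟩ := pathGraph_adj.mpr (Or.inl rfl)
    exact ⟨fun ⟨hi, hs⟩ => hτ _ _ hadj.symm hi hs, fun ⟨hi, hs⟩ => hτ _ _ hadj hs hi⟩

section Grid

variable {m n : ℕ}

lemma gridGraph_adj {a c : Fin m} {b d : Fin n} :
    (gridGraph m n).Adj (a, b) (c, d) ↔
      (pathGraph m).Adj a c ∧ b = d ∨ (pathGraph n).Adj b d ∧ a = c :=
  boxProd_adj

lemma rowSig_succ (S : Finset (Fin m × Fin (n + 1))) (i : Fin m) :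
    rowSig m (n + 1) S i = vertexState (gridGraph m (n + 1)) S (i, Fin.last n) := by
  simp [rowSig, Fin.last]

lemma isSignature_rowSig (S : Finset (Fin m × Fin n)) : IsSignature (rowSig m n S) := by
  obtain _ | n := n
  · intro i _
    simp [rowSig]
  refine isSignature_iff.mpr fun a i hadj hi ha => ?_
  rw [rowSig_succ, vertexState_eq_occ_iff] at ha
  rw [rowSig_succ, vertexState_eq_unc_iff] at hi
  exact hi.2 ⟨_, ha, gridGraph_adj.mpr (Or.inl ⟨hadj, rfl⟩)⟩

lemma almostDominating_succ_iff (S : Finset (Fin m × Fin (n + 1))) :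
    AlmostDominating m (n + 1) S ↔
      ∀ i (j : Fin n), vertexState (gridGraph m (n + 1)) S (i, j.castSucc) ≠ VState.unc := by
  constructor
  · exact fun h i j => h _ (by simp)
  · rintro h ⟨i, j⟩ hj
    exact h i ⟨j, by simpa using hj⟩

lemma gridGraph_adj_castSucc_castSucc {a i : Fin m} {b j : Fin n} :
    (gridGraph m (n + 1)).Adj (a, b.castSucc) (i, j.castSucc) ↔
      (gridGraph m n).Adj (a, b) (i, j) := by
  simp [gridGraph_adj, pathGraph_adj]

lemma gridGraph_adj_last_castSucc {a i : Fin m} {j : Fin n} :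
    (gridGraph m (n + 1)).Adj (a, Fin.last n) (i, j.castSucc) ↔ a = i ∧ (j : ℕ) + 1 = n := by
  simp only [gridGraph_adj, pathGraph_adj, Fin.val_last, Fin.val_castSucc,
    (Fin.castSucc_ne_last j).symm, and_false, false_or]
  omega

lemma gridGraph_adj_castSucc_last {a i : Fin m} {j : Fin n} :
    (gridGraph m (n + 1)).Adj (a, j.castSucc) (i, Fin.last n) ↔ a = i ∧ (j : ℕ) + 1 = n := by
  rw [SimpleGraph.adj_comm, gridGraph_adj_last_castSucc, eq_comm]

lemma gridGraph_adj_last_last {a i : Fin m} :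
    (gridGraph m (n + 1)).Adj (a, Fin.last n) (i, Fin.last n) ↔ (pathGraph m).Adj a i := by
  simp [gridGraph_adj]

def dropLastRow (S : Finset (Fin m × Fin (n + 1))) : Finset (Fin m × Fin n) :=
  univ.filter fun p => (p.1, p.2.castSucc) ∈ S

def addLastRow (S : Finset (Fin m × Fin n)) (R : Finset (Fin m)) : Finset (Fin m × Fin (n + 1)) :=
  S.map ((Function.Embedding.refl _).prodMap Fin.castSuccEmb) ∪
    R.map (Function.Embedding.sectL _ (Fin.last n))

@[simp]
lemma mem_dropLastRow {S : Finset (Fin m × Fin (n + 1))} {p : Fin m × Fin n} :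
    p ∈ dropLastRow S ↔ (p.1, p.2.castSucc) ∈ S := by
  simp [dropLastRow]

lemma exists_mem_addLastRow_iff {S : Finset (Fin m × Fin n)} {R : Finset (Fin m)}
    {P : Fin m × Fin (n + 1) → Prop} :
    (∃ u ∈ addLastRow S R, P u) ↔
      (∃ u ∈ S, P (u.1, u.2.castSucc)) ∨ ∃ a ∈ R, P (a, Fin.last n) := by
  simp [addLastRow, or_and_right, exists_or]

@[simp]
lemma mem_addLastRow_castSucc {S : Finset (Fin m × Fin n)} {R : Finset (Fin m)} {i : Fin m}
    {j : Fin n} : (i, j.castSucc) ∈ addLastRow S R ↔ (i, j) ∈ S := by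
  simp [addLastRow, (Fin.castSucc_lt_last j).ne']

@[simp]
lemma mem_addLastRow_last {S : Finset (Fin m × Fin n)} {R : Finset (Fin m)} {i : Fin m} :
    (i, Fin.last n) ∈ addLastRow S R ↔ i ∈ R := by
  simp [addLastRow]

lemma dropLastRow_addLastRow (S : Finset (Fin m × Fin n)) (R : Finset (Fin m)) :
    dropLastRow (addLastRow S R) = S := by
  ext; simp

lemma addLastRow_dropLastRow {S : Finset (Fin m × Fin (n + 1))} {R : Finset (Fin m)}
    (hR : ∀ i, (i, Fin.last n) ∈ S ↔ i ∈ R) : addLastRow (dropLastRow S) R = S := by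
  ext ⟨i, j⟩
  induction j using Fin.lastCases <;> simp [hR]

lemma card_addLastRow (S : Finset (Fin m × Fin n)) (R : Finset (Fin m)) :
    #(addLastRow S R) = #R + #S := by
  rw [addLastRow, card_union_of_disjoint, card_map, card_map, add_comm]
  simp only [Finset.disjoint_left, mem_map, Function.Embedding.sectL_apply, not_exists, not_and]
  rintro _ ⟨⟨_, j⟩, -, rfl⟩ _ - h
  exact Fin.castSucc_ne_last j (Prod.ext_iff.mp h).2.symm

lemma exists_adj_castSucc_iff (S : Finset (Fin m × Fin n)) (R : Finset (Fin m)) (i : Fin m)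
    (j : Fin n) :
    (∃ u ∈ addLastRow S R, (gridGraph m (n + 1)).Adj u (i, j.castSucc)) ↔
      (∃ u ∈ S, (gridGraph m n).Adj u (i, j)) ∨ (i ∈ R ∧ (j : ℕ) + 1 = n) := by
  rw [exists_mem_addLastRow_iff]
  simp [gridGraph_adj_castSucc_castSucc, gridGraph_adj_last_castSucc]

lemma exists_adj_last_iff (S : Finset (Fin m × Fin n)) (R : Finset (Fin m)) (i : Fin m) :
    (∃ u ∈ addLastRow S R, (gridGraph m (n + 1)).Adj u (i, Fin.last n)) ↔
      (∃ j : Fin n, (i, j) ∈ S ∧ (j : ℕ) + 1 = n) ∨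
        ∃ a ∈ R, (pathGraph m).Adj a i := by
  rw [exists_mem_addLastRow_iff]
  simp [gridGraph_adj_castSucc_last, gridGraph_adj_last_last]

lemma vertexState_addLastRow_castSucc_ne_unc_iff (S : Finset (Fin m × Fin n))
    (R : Finset (Fin m)) (i : Fin m) (j : Fin n) :
    vertexState (gridGraph m (n + 1)) (addLastRow S R) (i, j.castSucc) ≠ VState.unc ↔
      vertexState (gridGraph m n) S (i, j) ≠ VState.unc ∨ (i ∈ R ∧ (j : ℕ) + 1 = n) := by
  rw [vertexState_ne_unc_iff, vertexState_ne_unc_iff, mem_addLastRow_castSucc,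
    exists_adj_castSucc_iff, or_assoc]

end Grid

def occupied {m : ℕ} (τ : Fin m → VState) : Finset (Fin m) :=
  univ.filter fun i => τ i = VState.occ

@[simp]
lemma mem_occupied {m : ℕ} {τ : Fin m → VState} {i : Fin m} :
    i ∈ occupied τ ↔ τ i = VState.occ := by
  simp [occupied]

lemma card_occupied {m : ℕ} (τ : Fin m → VState) : #(occupied τ) = occCount τ := rfl

section LastRow

variable {m k : ℕ}

lemma almostDominating_addLastRow_iff (S : Finset (Fin m × Fin (k + 1)))
    (R : Finset (Fin m)) :
    AlmostDominating m (k + 1 + 1) (addLastRow S R) ↔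
      AlmostDominating m (k + 1) S ∧ ∀ i, rowSig m (k + 1) S i = VState.unc → i ∈ R := by
  simp only [almostDominating_succ_iff, vertexState_addLastRow_castSucc_ne_unc_iff,
    Fin.forall_fin_succ' (n := k), forall_and, rowSig_succ]
  exact and_congr (forall₂_congr fun i j => by simp [j.isLt.ne])
    (forall_congr' fun i => by simp [imp_iff_not_or])

lemma rowSig_addLastRow (S : Finset (Fin m × Fin (k + 1))) (R : Finset (Fin m)) (i : Fin m) :
    rowSig m (k + 1 + 1) (addLastRow S R) i =
      if i ∈ R then VState.occ
      else if rowSig m (k + 1) S i = VState.occ ∨ ∃ a ∈ R, (pathGraph m).Adj a i then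
        VState.cov
      else VState.unc := by
  have hprev : (∃ j : Fin (k + 1), (i, j) ∈ S ∧ (j : ℕ) + 1 = k + 1) ↔
      rowSig m (k + 1) S i = VState.occ := by
    simp [rowSig_succ, vertexState_eq_occ_iff, Fin.exists_fin_succ']
    exact fun j _ hj => absurd hj j.isLt.ne
  rw [rowSig_succ, vertexState_eq_ite _ _ _ mem_addLastRow_last
    ((exists_adj_last_iff S R i).trans (or_congr_left hprev))]

lemma almostDominating_addLastRow_and_rowSig_eq_iff {τ : Fin m → VState} (hτ : IsSignature τ)
    (S : Finset (Fin m × Fin (k + 1))) :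
    AlmostDominating m (k + 1 + 1) (addLastRow S (occupied τ)) ∧
        rowSig m (k + 1 + 1) (addLastRow S (occupied τ)) = τ ↔
      AlmostDominating m (k + 1) S ∧ Compatible τ (rowSig m (k + 1) S) := by
  rw [almostDominating_addLastRow_iff, funext_iff, and_assoc]
  refine and_congr_right fun _ => ?_
  rw [Compatible, ← forall_and]
  refine forall_congr' fun i => ?_
  rw [rowSig_addLastRow]
  simp only [mem_occupied]
  have hnbr : ((∃ j : Fin m, (j : ℕ) + 1 = i ∧ τ j = VState.occ) ∨
      ∃ j : Fin m, (i : ℕ) + 1 = j ∧ τ j = VState.occ) ↔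
      ∃ a, τ a = VState.occ ∧ (pathGraph m).Adj a i := by
    simp only [pathGraph_adj, and_or_left, exists_or, and_comm]
  -- An uncovered vertex of the new row must not see an occupied neighbour within that row.
  have hunc : τ i = VState.unc → ¬∃ a, τ a = VState.occ ∧ (pathGraph m).Adj a i :=
    fun hi ⟨a, ha, hadj⟩ => isSignature_iff.mp hτ a i hadj hi ha
  rw [hnbr]
  generalize rowSig m (k + 1) S i = s at *
  cases hi : τ i <;> cases s <;> simp_all

lemma genFun_add_two_eq_sum_compatible {τ : Fin m → VState} (hτ : IsSignature τ) :
    genFun m (k + 1 + 1) τ = ∑ S ∈ univ.filter (fun S : Finset (Fin m × Fin (k + 1)) =>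
      AlmostDominating m (k + 1) S ∧ Compatible τ (rowSig m (k + 1) S)),
        X ^ (occCount τ + #S) := by
  have hlast : ∀ S : Finset (Fin m × Fin (k + 1 + 1)), rowSig m (k + 1 + 1) S = τ →
      addLastRow (dropLastRow S) (occupied τ) = S := fun S hS =>
    addLastRow_dropLastRow fun i => by
      rw [mem_occupied, ← hS, rowSig_succ, vertexState_eq_occ_iff]
  rw [genFun]
  refine sum_nbij' dropLastRow (addLastRow · (occupied τ)) (fun S hS => ?_) (fun S hS => ?_)
    (fun S hS => hlast S (mem_filter.mp hS).2.2) (fun S _ => dropLastRow_addLastRow S _)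
    (fun S hS => ?_)
  · simp only [mem_filter, mem_univ, true_and] at hS ⊢
    rw [← almostDominating_addLastRow_and_rowSig_eq_iff hτ, hlast S hS.2]
    exact hS
  · simp only [mem_filter, mem_univ, true_and] at hS ⊢
    exact (almostDominating_addLastRow_and_rowSig_eq_iff hτ S).mpr hS
  · conv_lhs => rw [← hlast S (mem_filter.mp hS).2.2]
    rw [card_addLastRow, card_occupied]

end LastRow

lemma sum_mul_genFun {m : ℕ} (f : Signature m → ℤ[X]) (n : ℕ) :
    ∑ σ : Signature m, f σ * genFun m n σ.1 =
      ∑ S ∈ univ.filter (AlmostDominating m n),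
        f ⟨rowSig m n S, isSignature_rowSig S⟩ * X ^ #S := by
  rw [← sum_fiberwise _ fun S => (⟨rowSig m n S, isSignature_rowSig S⟩ : Signature m)]
  refine sum_congr rfl fun σ _ => ?_
  rw [genFun, mul_sum, filter_filter]
  refine sum_congr (filter_congr fun S _ => by rw [Subtype.ext_iff]) fun S hS => ?_
  obtain rfl := (mem_filter.mp hS).2.2
  rfl

lemma sum_transferMatrix_mul_genFun {m : ℕ} (τ : Signature m) (n : ℕ) :
    ∑ σ : Signature m, transferMatrix m τ σ * genFun m n σ.1 =
      ∑ S ∈ univ.filter (fun S : Finset (Fin m × Fin n) =>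
        AlmostDominating m n S ∧ Compatible τ.1 (rowSig m n S)), X ^ (occCount τ.1 + #S) := by
  rw [sum_mul_genFun]
  conv_rhs => rw [← filter_filter, sum_filter]
  refine sum_congr rfl fun S _ => ?_
  simp only [transferMatrix, ite_mul, zero_mul, pow_add]

theorem genFun_eq_transferMatrix_mul (m n : ℕ) (hn : 2 ≤ n) (τ : Signature m) :
    genFun m n τ.1 = ∑ σ : Signature m, transferMatrix m τ σ * genFun m (n - 1) σ.1 := by
  obtain ⟨k, rfl⟩ : ∃ k, n = k + 1 + 1 := ⟨n - 2, by omega⟩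
  rw [Nat.add_sub_cancel, sum_transferMatrix_mul_genFun, genFun_add_two_eq_sum_compatible τ.2]
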